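/- arXiv:2311.14205 — 4 statements merged into one kernel-verified Lean document; each statement's English description precedes it below -/
import Mathlib

section
/- Fix b > 0 and β > 0 with b·β > 1. For N ≥ 1 and 0 ≤ k ≤ N set m_k = −1 + 2k/N, define the Curie–Weiss partition function Z_N(q) = Σ_{k=0}^{N} (N choose k) · exp( β·N·( q·m_k + b·m_k²/2 ) ), and let f_N(q) = (β·N)⁻¹ · log Z_N(q). Let f(q) = sup_{m ∈ [−1,1]} ( q·m + b·m²/2 − β⁻¹·c(m) ). Then f_N converges to f uniformly on every compact interval I ⊂ ℝ as N → ∞. -/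
open Finset Filter

/-- The symmetrized entropy function
`c(m) = ((1+m)/2)·log((1+m)/2) + ((1−m)/2)·log((1−m)/2)` (with `c(±1) = 0`,
as `Real.log 0 = 0` in Lean). -/
noncomputable def cEnt (m : ℝ) : ℝ :=
  ((1 + m) / 2) * Real.log ((1 + m) / 2) + ((1 - m) / 2) * Real.log ((1 - m) / 2)

section aux

lemma continuous_cEnt : Continuous cEnt := by
  unfold cEnt
  have h := Real.continuous_mul_log
  exact ((h.comp (by continuity : Continuous fun m : ℝ => (1+m)/2)).add
    (h.comp (by continuity : Continuous fun m : ℝ => (1-m)/2)))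

noncomputable def bt (N k : ℕ) (j : ℕ) : ℝ :=
  (N.choose j : ℝ) * ((k:ℝ)/N)^j * (((N-k : ℕ):ℝ)/N)^(N-j)

lemma bt_nonneg (N k j : ℕ) : 0 ≤ bt N k j := by
  unfold bt; positivity

lemma bt_sum (N k : ℕ) (hk : k ≤ N) (hN : 0 < N) :
    ∑ j ∈ range (N+1), bt N k j = 1 := by
  have hpq : (k:ℝ)/N + ((N-k:ℕ):ℝ)/N = 1 := by
    rw [Nat.cast_sub hk]; field_simp; ring
  have h := add_pow ((k:ℝ)/N) (((N-k:ℕ):ℝ)/N) N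
  rw [hpq, one_pow] at h
  rw [h]
  apply Finset.sum_congr rfl
  intro j _
  unfold bt; ring

lemma bt_upper (N k : ℕ) (hk : k ≤ N) (hN : 0 < N) (j : ℕ) (hj : j ≤ N) :
    bt N k j ≤ 1 := by
  rw [← bt_sum N k hk hN]
  exact Finset.single_le_sum (fun i _ => bt_nonneg N k i)
    (Finset.mem_range.2 (Nat.lt_succ_of_le hj))

lemma bt_compare (N k j : ℕ) (hN : 0 < N) (hjN : j < N) :
    (bt N k (j+1)) * ((j:ℝ)+1)
      = ((N.choose j : ℝ) * (((k:ℝ)/N)^j * (((N-k:ℕ):ℝ)/N)^(N-(j+1)))) * (((N-j:ℕ):ℝ) * ((k:ℝ)/N))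
    ∧ (bt N k j) * ((j:ℝ)+1)
      = ((N.choose j : ℝ) * (((k:ℝ)/N)^j * (((N-k:ℕ):ℝ)/N)^(N-(j+1)))) * (((j:ℝ)+1) * (((N-k:ℕ):ℝ)/N)) := by
  have hident : ((N.choose (j+1) : ℝ)) * ((j:ℝ)+1) = (N.choose j : ℝ) * ((N-j:ℕ):ℝ) := by
    exact_mod_cast congrArg (Nat.cast : ℕ → ℝ) (Nat.choose_succ_right_eq N j)
  have hNj1 : N - j = (N - (j+1)) + 1 := by omega
  constructor
  · unfold bt
    rw [pow_succ]
    calc (N.choose (j+1) : ℝ) * (((k:ℝ)/N)^j * ((k:ℝ)/N)) * (((N-k:ℕ):ℝ)/N)^(N-(j+1)) * ((j:ℝ)+1)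
        = ((N.choose (j+1) : ℝ) * ((j:ℝ)+1)) * (((k:ℝ)/N)^j * ((k:ℝ)/N)) * (((N-k:ℕ):ℝ)/N)^(N-(j+1)) := by ring
      _ = _ := by rw [hident]; ring
  · unfold bt
    rw [hNj1, pow_succ]
    ring

lemma bt_le_bt_succ (N k j : ℕ) (hk : k ≤ N) (hN : 0 < N) (hjN : j < N)
    (h : (j+1) * (N - k) ≤ (N - j) * k) : bt N k j ≤ bt N k (j+1) := by
  obtain ⟨e1, e2⟩ := bt_compare N k j hN hjN
  have hj1 : (0:ℝ) < (j:ℝ)+1 := by positivity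
  have hNr : (0:ℝ) < (N:ℝ) := by exact_mod_cast hN
  have hc : ((j:ℝ)+1) * (((N-k:ℕ):ℝ)/N) ≤ ((N-j:ℕ):ℝ) * ((k:ℝ)/N) := by
    have h' : ((j:ℝ)+1) * ((N-k:ℕ):ℝ) ≤ ((N-j:ℕ):ℝ) * (k:ℝ) := by exact_mod_cast h
    calc ((j:ℝ)+1) * (((N-k:ℕ):ℝ)/N) = (((j:ℝ)+1) * ((N-k:ℕ):ℝ))/N := by ring
      _ ≤ (((N-j:ℕ):ℝ) * (k:ℝ))/N := by gcongr
      _ = _ := by ring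
  have hA : (0:ℝ) ≤ (N.choose j : ℝ) * (((k:ℝ)/N)^j * (((N-k:ℕ):ℝ)/N)^(N-(j+1))) := by positivity
  have := mul_le_mul_of_nonneg_left hc hA
  rw [← e1, ← e2] at this
  exact le_of_mul_le_mul_right this hj1

lemma bt_succ_le_bt (N k j : ℕ) (hk : k ≤ N) (hN : 0 < N)
    (h : (N - j) * k ≤ (j+1) * (N - k)) : bt N k (j+1) ≤ bt N k j := by
  rcases le_or_gt N j with hNj | hjN
  · have hz : N.choose (j+1) = 0 := Nat.choose_eq_zero_of_lt (Nat.lt_succ_of_le hNj)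
    unfold bt
    rw [hz]
    simpa using mul_nonneg (mul_nonneg (by positivity) (by positivity)) (by positivity : (0:ℝ) ≤ (((N-k:ℕ):ℝ)/N)^(N-j))
  · obtain ⟨e1, e2⟩ := bt_compare N k j hN hjN
    have hj1 : (0:ℝ) < (j:ℝ)+1 := by positivity
    have hNr : (0:ℝ) < (N:ℝ) := by exact_mod_cast hN
    have hc : ((N-j:ℕ):ℝ) * ((k:ℝ)/N) ≤ ((j:ℝ)+1) * (((N-k:ℕ):ℝ)/N) := by
      have h' : ((N-j:ℕ):ℝ) * (k:ℝ) ≤ ((j:ℝ)+1) * ((N-k:ℕ):ℝ) := by exact_mod_cast h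
      calc ((N-j:ℕ):ℝ) * ((k:ℝ)/N) = (((N-j:ℕ):ℝ) * (k:ℝ))/N := by ring
        _ ≤ (((j:ℝ)+1) * ((N-k:ℕ):ℝ))/N := by gcongr
        _ = _ := by ring
    have hA : (0:ℝ) ≤ (N.choose j : ℝ) * (((k:ℝ)/N)^j * (((N-k:ℕ):ℝ)/N)^(N-(j+1))) := by positivity
    have := mul_le_mul_of_nonneg_left hc hA
    rw [← e1, ← e2] at this
    exact le_of_mul_le_mul_right this hj1

lemma bt_le_mode (N k : ℕ) (hk : k ≤ N) (hN : 0 < N) (j : ℕ) :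
    bt N k j ≤ bt N k k := by
  have up : ∀ d j, j + d = k → bt N k j ≤ bt N k k := by
    intro d
    induction d with
    | zero => intro j hj; rw [Nat.add_zero] at hj; subst hj; exact le_refl _
    | succ d ih =>
      intro j hj
      have h1 : bt N k j ≤ bt N k (j+1) := by
        apply bt_le_bt_succ N k j hk hN (by omega)
        calc (j+1) * (N - k) ≤ k * (N - j) := Nat.mul_le_mul (by omega) (by omega)
          _ = (N - j) * k := Nat.mul_comm _ _
      exact h1.trans (ih (j+1) (by omega))
  have down : ∀ d, bt N k (k + d) ≤ bt N k k := by
    intro d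
    induction d with
    | zero => exact le_refl _
    | succ d ih =>
      have h1 : bt N k (k+d+1) ≤ bt N k (k+d) := by
        apply bt_succ_le_bt N k (k+d) hk hN
        calc (N - (k+d)) * k ≤ (N - k) * (k+d+1) := Nat.mul_le_mul (by omega) (by omega)
          _ = (k+d+1) * (N - k) := Nat.mul_comm _ _
      have he : k + (d+1) = k + d + 1 := by omega
      rw [he]
      exact h1.trans ih
  rcases le_or_gt j k with hjk | hkj
  · exact up (k - j) j (by omega)
  · have : j = k + (j - k) := by omega
    rw [this]
    exact down (j - k)

lemma bt_lower (N k : ℕ) (hk : k ≤ N) (hN : 0 < N) :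
    1 ≤ ((N:ℝ)+1) * bt N k k := by
  calc (1:ℝ) = ∑ j ∈ range (N+1), bt N k j := (bt_sum N k hk hN).symm
    _ ≤ ∑ _j ∈ range (N+1), bt N k k :=
        Finset.sum_le_sum (fun j _ => bt_le_mode N k hk hN j)
    _ = ((N:ℝ)+1) * bt N k k := by
        rw [Finset.sum_const, Finset.card_range]; push_cast; ring

lemma exp_neg_log_pow (x : ℝ) (n : ℕ) (h : 0 < x ∨ n = 0) :
    Real.exp (-(n:ℝ) * Real.log x) * x^n = 1 := by
  rcases h with hx | hn
  · have h1 : Real.exp ((n:ℝ) * Real.log x) = x^n := by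
      rw [Real.exp_nat_mul, Real.exp_log hx]
    rw [neg_mul, Real.exp_neg, h1]
    field_simp
  · subst hn; simp

lemma exp_cEnt_eq (N k : ℕ) (hk : k ≤ N) (hN : 0 < N) :
    Real.exp (-(N:ℝ) * cEnt (-1 + 2*(k:ℝ)/N)) * (((k:ℝ)/N)^k * (((N-k:ℕ):ℝ)/N)^(N-k)) = 1 := by
  have hNne : (N:ℝ) ≠ 0 := by positivity
  have hm1 : (1 + (-1 + 2*(k:ℝ)/N))/2 = (k:ℝ)/N := by field_simp; ring
  have hm2 : (1 - (-1 + 2*(k:ℝ)/N))/2 = ((N-k:ℕ):ℝ)/N := by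
    rw [Nat.cast_sub hk]; field_simp; ring
  have hsplit : -(N:ℝ) * cEnt (-1 + 2*(k:ℝ)/N)
      = -(k:ℝ) * Real.log ((k:ℝ)/N) + -(((N-k:ℕ):ℝ)) * Real.log (((N-k:ℕ):ℝ)/N) := by
    unfold cEnt
    rw [hm1, hm2]
    have e1 : (N:ℝ) * ((k:ℝ)/N) = (k:ℝ) := by field_simp
    have e2 : (N:ℝ) * (((N-k:ℕ):ℝ)/N) = ((N-k:ℕ):ℝ) := by field_simp
    calc -(N:ℝ) * ((k:ℝ)/N * Real.log ((k:ℝ)/N) + ((N-k:ℕ):ℝ)/N * Real.log (((N-k:ℕ):ℝ)/N))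
        = -((N:ℝ) * ((k:ℝ)/N)) * Real.log ((k:ℝ)/N)
          + -((N:ℝ) * (((N-k:ℕ):ℝ)/N)) * Real.log (((N-k:ℕ):ℝ)/N) := by ring
      _ = _ := by rw [e1, e2]
  rw [hsplit, Real.exp_add]
  have h1 : Real.exp (-(k:ℝ) * Real.log ((k:ℝ)/N)) * ((k:ℝ)/N)^k = 1 := by
    apply exp_neg_log_pow
    rcases Nat.eq_zero_or_pos k with h | h
    · right; exact h
    · left; positivity
  have h2 : Real.exp (-(((N-k:ℕ):ℝ)) * Real.log (((N-k:ℕ):ℝ)/N)) * (((N-k:ℕ):ℝ)/N)^(N-k) = 1 := by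
    apply exp_neg_log_pow
    rcases Nat.eq_zero_or_pos (N-k) with h | h
    · right; exact h
    · left
      have : (0:ℝ) < ((N-k:ℕ):ℝ) := by exact_mod_cast h
      positivity
  calc Real.exp (-(k:ℝ) * Real.log ((k:ℝ)/N)) * Real.exp (-(((N-k:ℕ):ℝ)) * Real.log (((N-k:ℕ):ℝ)/N))
        * (((k:ℝ)/N)^k * (((N-k:ℕ):ℝ)/N)^(N-k))
      = (Real.exp (-(k:ℝ) * Real.log ((k:ℝ)/N)) * ((k:ℝ)/N)^k)
        * (Real.exp (-(((N-k:ℕ):ℝ)) * Real.log (((N-k:ℕ):ℝ)/N)) * (((N-k:ℕ):ℝ)/N)^(N-k)) := by ring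
    _ = 1 := by rw [h1, h2]; norm_num

lemma choose_le_exp_cEnt (N k : ℕ) (hk : k ≤ N) (hN : 0 < N) :
    (N.choose k : ℝ) ≤ Real.exp (-(N:ℝ) * cEnt (-1 + 2*(k:ℝ)/N)) := by
  set P := ((k:ℝ)/N)^k * (((N-k:ℕ):ℝ)/N)^(N-k) with hP
  set E := Real.exp (-(N:ℝ) * cEnt (-1 + 2*(k:ℝ)/N)) with hE
  have hEP : E * P = 1 := exp_cEnt_eq N k hk hN
  have hEpos : 0 < E := Real.exp_pos _
  have hPpos : 0 < P := by
    by_contra hc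
    push_neg at hc
    nlinarith
  have hCP : (N.choose k : ℝ) * P ≤ 1 := by
    have := bt_upper N k hk hN k hk
    unfold bt at this
    rw [hP]
    nlinarith [this]
  calc (N.choose k : ℝ) = ((N.choose k : ℝ) * P) * P⁻¹ := by field_simp
    _ ≤ 1 * P⁻¹ := by
        apply mul_le_mul_of_nonneg_right hCP (by positivity)
    _ = E := by
        rw [one_mul]
        field_simp
        nlinarith [hEP]

lemma exp_cEnt_le_choose (N k : ℕ) (hk : k ≤ N) (hN : 0 < N) :
    Real.exp (-(N:ℝ) * cEnt (-1 + 2*(k:ℝ)/N)) ≤ ((N:ℝ)+1) * (N.choose k : ℝ) := by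
  set P := ((k:ℝ)/N)^k * (((N-k:ℕ):ℝ)/N)^(N-k) with hP
  set E := Real.exp (-(N:ℝ) * cEnt (-1 + 2*(k:ℝ)/N)) with hE
  have hEP : E * P = 1 := exp_cEnt_eq N k hk hN
  have hEpos : 0 < E := Real.exp_pos _
  have hPpos : 0 < P := by
    by_contra hc
    push_neg at hc
    nlinarith
  have hCP : 1 ≤ ((N:ℝ)+1) * ((N.choose k : ℝ) * P) := by
    have := bt_lower N k hk hN
    unfold bt at this
    rw [hP]
    nlinarith [this]
  calc E = E * 1 := by ring
    _ ≤ E * (((N:ℝ)+1) * ((N.choose k : ℝ) * P)) := by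
        apply mul_le_mul_of_nonneg_left hCP (le_of_lt hEpos)
    _ = ((N:ℝ)+1) * (N.choose k : ℝ) * (E * P) := by ring
    _ = ((N:ℝ)+1) * (N.choose k : ℝ) := by rw [hEP, mul_one]

end aux

set_option maxHeartbeats 1600000 in
/-- The rescaled log-partition functions `f_N` of the Curie–Weiss
model converge uniformly on every compact interval to
`f(q) = sup_{m∈[−1,1]} (q·m + b·m²/2 − β⁻¹·c(m))` as `N → ∞`. -/
theorem curie_weiss_free_energy_uniform_convergence
    (b β : ℝ) (hb : 0 < b) (hβ : 0 < β) (hbβ : 1 < b * β)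
    (fN : ℕ → ℝ → ℝ)
    (hfN : ∀ N : ℕ, 1 ≤ N → ∀ q : ℝ,
      fN N q = (β * N)⁻¹ * Real.log (∑ k ∈ Finset.range (N + 1),
        (N.choose k : ℝ) * Real.exp (β * N *
          (q * (-1 + 2 * k / N) + b * (-1 + 2 * k / N) ^ 2 / 2))))
    (f : ℝ → ℝ)
    (hf : ∀ q : ℝ, f q = sSup ((fun m => q * m + b * m ^ 2 / 2 - β⁻¹ * cEnt m) ''
      Set.Icc (-1 : ℝ) 1)) :
    ∀ a a' : ℝ, TendstoUniformlyOn (fun N => fN N) f atTop (Set.Icc a a') := by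
  intro a a'
  rw [Metric.tendstoUniformlyOn_iff]
  intro ε hε
  set M : ℝ := max |a| |a'| + 1 with hM
  have hM1 : 0 < M := by positivity
  -- continuity facts
  set ψ : ℝ → ℝ := fun m => b * m ^ 2 / 2 - β⁻¹ * cEnt m with hψdef
  have hψc : Continuous ψ := by
    apply Continuous.sub
    · continuity
    · exact continuous_const.mul continuous_cEnt
  have hφc : ∀ q : ℝ, Continuous fun m => q * m + b * m ^ 2 / 2 - β⁻¹ * cEnt m := by
    intro q
    apply Continuous.sub
    · continuity
    · exact continuous_const.mul continuous_cEnt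
  -- uniform continuity of ψ on [-1,1]
  obtain ⟨δ, hδ, hδu⟩ := Metric.uniformContinuousOn_iff.1
    (isCompact_Icc.uniformContinuousOn_of_continuous (hψc.continuousOn)
      : UniformContinuousOn ψ (Set.Icc (-1:ℝ) 1)) (ε/3) (by positivity)
  -- the log correction term tends to zero
  have hL : Tendsto (fun N : ℕ => (β * N)⁻¹ * Real.log ((N:ℝ)+1)) atTop (nhds 0) := by
    have t1 : Tendsto (fun x : ℝ => Real.log x / x) atTop (nhds 0) :=
      Real.isLittleO_log_id_atTop.tendsto_div_nhds_zero
    have t2 : Tendsto (fun N : ℕ => ((N:ℝ)+1)) atTop atTop :=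
      tendsto_atTop_add_const_right _ 1 tendsto_natCast_atTop_atTop
    have t3 : Tendsto (fun N : ℕ => Real.log ((N:ℝ)+1) / ((N:ℝ)+1)) atTop (nhds 0) := t1.comp t2
    have t4 : Tendsto (fun N : ℕ => ((N:ℝ)+1) * (β * N)⁻¹) atTop (nhds β⁻¹) := by
      have t5 : Tendsto (fun N : ℕ => β⁻¹ + β⁻¹ * ((N:ℝ))⁻¹) atTop (nhds β⁻¹) := by
        have := tendsto_const_nhds (x := β⁻¹) (f := atTop (α := ℕ)) |>.add
          ((tendsto_const_nhds (x := β⁻¹) (f := atTop (α := ℕ))).mul tendsto_inv_atTop_nhds_zero_nat)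
        simpa using this
      apply t5.congr'
      filter_upwards [eventually_ge_atTop 1] with N hN1
      have hNr : (0:ℝ) < N := by exact_mod_cast hN1
      field_simp
    have t6 := t3.mul t4
    rw [zero_mul] at t6
    apply t6.congr'
    filter_upwards [eventually_ge_atTop 1] with N hN1
    have hNr : (0:ℝ) < N := by exact_mod_cast hN1
    field_simp
  have hev4 : ∀ᶠ N : ℕ in atTop, (β * N)⁻¹ * Real.log ((N:ℝ)+1) < ε/3 :=
    hL.eventually (gt_mem_nhds (by positivity))
  have hev2 : ∀ᶠ N : ℕ in atTop, (2:ℝ)/N < δ :=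
    (tendsto_const_div_atTop_nhds_zero_nat 2).eventually (gt_mem_nhds hδ)
  have hev3 : ∀ᶠ N : ℕ in atTop, 2*M/N < ε/3 :=
    (tendsto_const_div_atTop_nhds_zero_nat (2*M)).eventually (gt_mem_nhds (by positivity))
  filter_upwards [eventually_ge_atTop 1, hev2, hev3, hev4] with N hN1 hN2 hN3 hN4
  intro q hq
  -- setup
  have hNpos : 0 < N := hN1
  have hNr : (0:ℝ) < N := by exact_mod_cast hN1
  have hβN : (0:ℝ) < β * N := by positivity
  have hqM : |q| ≤ M := by
    rw [abs_le]
    constructor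
    · have h1 : -|a| ≤ a := neg_abs_le a
      have h2 : |a| ≤ max |a| |a'| := le_max_left _ _
      have := hq.1
      simp only [hM]
      linarith
    · have h1 : a' ≤ |a'| := le_abs_self a'
      have h2 : |a'| ≤ max |a| |a'| := le_max_right _ _
      have := hq.2
      simp only [hM]
      linarith
  -- the sup
  set S : Set ℝ := (fun m => q * m + b * m ^ 2 / 2 - β⁻¹ * cEnt m) '' Set.Icc (-1 : ℝ) 1 with hS
  have hfq : f q = sSup S := hf q
  have hSc : IsCompact S := isCompact_Icc.image (hφc q)
  have hSne : S.Nonempty := ⟨_, Set.mem_image_of_mem _ (by norm_num : (1:ℝ) ∈ Set.Icc (-1:ℝ) 1)⟩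
  have hub : ∀ m ∈ Set.Icc (-1:ℝ) 1, q * m + b * m ^ 2 / 2 - β⁻¹ * cEnt m ≤ f q := by
    intro m hm
    rw [hfq]
    exact le_csSup hSc.bddAbove (Set.mem_image_of_mem _ hm)
  obtain ⟨mstar, hmstar, hmeq⟩ : ∃ m ∈ Set.Icc (-1:ℝ) 1,
      q * m + b * m ^ 2 / 2 - β⁻¹ * cEnt m = f q := by
    have hmem : sSup S ∈ S := hSc.sSup_mem hSne
    obtain ⟨m, hm, hmeq⟩ := hmem
    exact ⟨m, hm, by simpa using hmeq.trans hfq.symm⟩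
  -- positivity of the partition sum
  set Z : ℝ := ∑ k ∈ Finset.range (N + 1),
      (N.choose k : ℝ) * Real.exp (β * N *
        (q * (-1 + 2 * (k:ℝ) / N) + b * (-1 + 2 * (k:ℝ) / N) ^ 2 / 2)) with hZ
  have hterm_pos : ∀ k ∈ Finset.range (N+1), 0 < (N.choose k : ℝ) * Real.exp (β * N *
      (q * (-1 + 2 * (k:ℝ) / N) + b * (-1 + 2 * (k:ℝ) / N) ^ 2 / 2)) := by
    intro k hk
    have hkN : k ≤ N := Nat.lt_succ_iff.mp (Finset.mem_range.mp hk)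
    have hck : 0 < N.choose k := Nat.choose_pos hkN
    have : (0:ℝ) < (N.choose k : ℝ) := by exact_mod_cast hck
    positivity
  have hZpos : 0 < Z := Finset.sum_pos hterm_pos ⟨0, by simp⟩
  have hfNq : fN N q = (β * N)⁻¹ * Real.log Z := hfN N hN1 q
  -- exponent rearrangement helper
  have hexp_re : ∀ m : ℝ, β * N * (q * m + b * m ^ 2 / 2) + (-(N:ℝ) * cEnt m)
      = β * N * (q * m + b * m ^ 2 / 2 - β⁻¹ * cEnt m) := by
    intro m
    field_simp
    ring
  -- membership of grid points
  have hmk_mem : ∀ k : ℕ, k ≤ N → (-1 + 2 * (k:ℝ) / N) ∈ Set.Icc (-1:ℝ) 1 := by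
    intro k hk
    constructor
    · have : (0:ℝ) ≤ 2 * (k:ℝ) / N := by positivity
      linarith
    · have hkr : (k:ℝ) ≤ N := by exact_mod_cast hk
      have : 2 * (k:ℝ) / N ≤ 2 := by
        rw [div_le_iff₀ hNr]
        linarith
      linarith
  -- UPPER BOUND: fN N q ≤ f q + (β N)⁻¹ log (N+1)
  have hupper : fN N q ≤ f q + (β * N)⁻¹ * Real.log ((N:ℝ)+1) := by
    have hterm_le : ∀ k ∈ Finset.range (N+1),
        (N.choose k : ℝ) * Real.exp (β * N *
          (q * (-1 + 2 * (k:ℝ) / N) + b * (-1 + 2 * (k:ℝ) / N) ^ 2 / 2))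
        ≤ Real.exp (β * N * f q) := by
      intro k hk
      have hkN : k ≤ N := by simp only [Finset.mem_range] at hk; omega
      set m := -1 + 2 * (k:ℝ) / N with hm
      calc (N.choose k : ℝ) * Real.exp (β * N * (q * m + b * m ^ 2 / 2))
          ≤ Real.exp (-(N:ℝ) * cEnt m) * Real.exp (β * N * (q * m + b * m ^ 2 / 2)) := by
            apply mul_le_mul_of_nonneg_right (choose_le_exp_cEnt N k hkN hNpos) (Real.exp_pos _).le
        _ = Real.exp (β * N * (q * m + b * m ^ 2 / 2 - β⁻¹ * cEnt m)) := by
            rw [← Real.exp_add, ← hexp_re m]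
            ring_nf
        _ ≤ Real.exp (β * N * f q) := by
            apply Real.exp_le_exp.2
            apply mul_le_mul_of_nonneg_left (hub m (hmk_mem k hkN)) (le_of_lt hβN)
    have hZle : Z ≤ ((N:ℝ)+1) * Real.exp (β * N * f q) := by
      calc Z ≤ ∑ _k ∈ Finset.range (N+1), Real.exp (β * N * f q) :=
            Finset.sum_le_sum hterm_le
        _ = ((N:ℝ)+1) * Real.exp (β * N * f q) := by
            rw [Finset.sum_const, Finset.card_range]
            push_cast
            ring
    have hlogZ : Real.log Z ≤ Real.log ((N:ℝ)+1) + β * N * f q := by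
      calc Real.log Z ≤ Real.log (((N:ℝ)+1) * Real.exp (β * N * f q)) :=
            Real.log_le_log hZpos hZle
        _ = Real.log ((N:ℝ)+1) + β * N * f q := by
            rw [Real.log_mul (by positivity) (Real.exp_ne_zero _), Real.log_exp]
    rw [hfNq]
    calc (β * N)⁻¹ * Real.log Z ≤ (β * N)⁻¹ * (Real.log ((N:ℝ)+1) + β * N * f q) := by
          apply mul_le_mul_of_nonneg_left hlogZ (by positivity)
      _ = f q + (β * N)⁻¹ * Real.log ((N:ℝ)+1) := by
          field_simp
          ring
  -- LOWER BOUND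
  -- choose grid point near mstar
  set k : ℕ := ⌈(1 + mstar)/2 * N⌉₊ with hk
  have hx0 : (0:ℝ) ≤ (1 + mstar)/2 * N := by
    have := hmstar.1
    have h1 : (0:ℝ) ≤ (1 + mstar)/2 := by linarith
    positivity
  have hkN : k ≤ N := by
    rw [hk, Nat.ceil_le]
    have : (1 + mstar)/2 ≤ 1 := by have := hmstar.2; linarith
    calc (1 + mstar)/2 * N ≤ 1 * N := by
          apply mul_le_mul_of_nonneg_right this (le_of_lt hNr)
      _ = (N:ℝ) := one_mul _
  have hkx : (1 + mstar)/2 * N ≤ (k:ℝ) := Nat.le_ceil _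
  have hkx2 : (k:ℝ) < (1 + mstar)/2 * N + 1 := Nat.ceil_lt_add_one hx0
  set mk : ℝ := -1 + 2 * (k:ℝ) / N with hmk
  have hmk_in : mk ∈ Set.Icc (-1:ℝ) 1 := hmk_mem k hkN
  have hms_le_mk : mstar ≤ mk := by
    have h1 : (1 + mstar) * N ≤ 2 * (k:ℝ) := by linarith
    have h2 : 1 + mstar ≤ 2 * (k:ℝ) / N := by
      rw [le_div_iff₀ hNr]
      linarith
    simp only [hmk]
    linarith
  have hmk_close : mk - mstar < 2/N := by
    have h1 : 2 * (k:ℝ) < (1 + mstar) * N + 2 := by linarith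
    have h2 : 2 * (k:ℝ) / N < (1 + mstar) + 2/N := by
      rw [div_lt_iff₀ hNr]
      have : ((1 + mstar) + 2/N) * N = (1 + mstar) * N + 2 := by
        rw [add_mul, div_mul_cancel₀ _ (ne_of_gt hNr)]
      rw [this]
      exact h1
    simp only [hmk]
    linarith
  -- ψ close
  have hψclose : |ψ mk - ψ mstar| < ε/3 := by
    have hdist : dist mk mstar < δ := by
      rw [Real.dist_eq, abs_of_nonneg (by linarith : (0:ℝ) ≤ mk - mstar)]
      exact lt_trans hmk_close hN2
    have := hδu mk hmk_in mstar hmstar hdist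
    rwa [Real.dist_eq] at this
  -- φ q mk is close to f q
  have hφlow : f q - (2*M/N + ε/3) ≤ q * mk + b * mk ^ 2 / 2 - β⁻¹ * cEnt mk := by
    have e1 : q * mstar + b * mstar ^ 2 / 2 - β⁻¹ * cEnt mstar = f q := hmeq
    have e2 : q * mk + b * mk ^ 2 / 2 - β⁻¹ * cEnt mk = q * mk + ψ mk := by
      simp only [hψdef]; ring
    have e3 : q * mstar + b * mstar ^ 2 / 2 - β⁻¹ * cEnt mstar = q * mstar + ψ mstar := by
      simp only [hψdef]; ring
    have hqd : |q * mk - q * mstar| ≤ 2*M/N := by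
      rw [← mul_sub, abs_mul]
      calc |q| * |mk - mstar| ≤ M * (2/N) := by
            apply mul_le_mul hqM _ (abs_nonneg _) (le_of_lt hM1)
            rw [abs_of_nonneg (by linarith : (0:ℝ) ≤ mk - mstar)]
            linarith
        _ = 2*M/N := by ring
    have h1 : -(2*M/N) ≤ q * mk - q * mstar := by
      have := neg_abs_le (q * mk - q * mstar)
      linarith [abs_le.1 hqd]
    have h2 : -(ε/3) ≤ ψ mk - ψ mstar := by
      linarith [abs_le.1 hψclose.le]
    rw [e2]
    rw [e3] at e1
    linarith
  -- lower bound on fN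
  have hlower : f q - (2*M/N + ε/3) - (β * N)⁻¹ * Real.log ((N:ℝ)+1) ≤ fN N q := by
    set φk : ℝ := q * mk + b * mk ^ 2 / 2 - β⁻¹ * cEnt mk with hφk
    have hterm_ge : Real.exp (β * N * φk) / ((N:ℝ)+1)
        ≤ (N.choose k : ℝ) * Real.exp (β * N * (q * mk + b * mk ^ 2 / 2)) := by
      have h1 : Real.exp (-(N:ℝ) * cEnt mk) ≤ ((N:ℝ)+1) * (N.choose k : ℝ) :=
        exp_cEnt_le_choose N k hkN hNpos
      have h2 : Real.exp (β * N * φk)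
          = Real.exp (β * N * (q * mk + b * mk ^ 2 / 2)) * Real.exp (-(N:ℝ) * cEnt mk) := by
        rw [← Real.exp_add, hφk, ← hexp_re mk]
      rw [h2, div_le_iff₀ (by positivity : (0:ℝ) < (N:ℝ)+1)]
      calc Real.exp (β * N * (q * mk + b * mk ^ 2 / 2)) * Real.exp (-(N:ℝ) * cEnt mk)
          ≤ Real.exp (β * N * (q * mk + b * mk ^ 2 / 2)) * (((N:ℝ)+1) * (N.choose k : ℝ)) := by
            apply mul_le_mul_of_nonneg_left h1 (Real.exp_pos _).le
        _ = (N.choose k : ℝ) * Real.exp (β * N * (q * mk + b * mk ^ 2 / 2)) * ((N:ℝ)+1) := by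
            ring
    have hZge : Real.exp (β * N * φk) / ((N:ℝ)+1) ≤ Z := by
      apply hterm_ge.trans
      rw [hZ]
      exact Finset.single_le_sum (fun i hi => (hterm_pos i hi).le)
        (Finset.mem_range.2 (Nat.lt_succ_of_le hkN))
    have hlogZ : β * N * φk - Real.log ((N:ℝ)+1) ≤ Real.log Z := by
      calc β * N * φk - Real.log ((N:ℝ)+1)
          = Real.log (Real.exp (β * N * φk) / ((N:ℝ)+1)) := by
            rw [Real.log_div (Real.exp_ne_zero _) (by positivity), Real.log_exp]
        _ ≤ Real.log Z := Real.log_le_log (by positivity) hZge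
    have : φk - (β * N)⁻¹ * Real.log ((N:ℝ)+1) ≤ fN N q := by
      rw [hfNq]
      calc φk - (β * N)⁻¹ * Real.log ((N:ℝ)+1)
          = (β * N)⁻¹ * (β * N * φk - Real.log ((N:ℝ)+1)) := by
            field_simp
        _ ≤ (β * N)⁻¹ * Real.log Z := by
            apply mul_le_mul_of_nonneg_left hlogZ (by positivity)
    have hφ' : f q - (2*M/N + ε/3) ≤ φk := hφlow
    linarith
  -- conclude
  rw [Real.dist_eq, abs_sub_lt_iff]
  constructor
  · -- f q - fN N q < ε
    have : (2:ℝ)*M/N < ε/3 := hN3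
    linarith
  · -- fN N q - f q < ε
    linarith
end

section
/- Let b > 0 and let 1/b < β < β'. Let p₊(β) and p₊(β') denote the unique solutions in (0,1) of p = tanh(b·β·p) and p = tanh(b·β'·p), respectively. Then p₊(β) < p₊(β'); i.e., the positive mean-field solution is strictly increasing as a function of the inverse temperature β. -/
open Real

lemma aux_sinh_lt_mul_cosh {x : ℝ} (hx : 0 < x) : Real.sinh x < x * Real.cosh x := by
  have hmono : StrictMonoOn (fun y : ℝ => y * Real.cosh y - Real.sinh y) (Set.Ici 0) := by
    apply strictMonoOn_of_deriv_pos (convex_Ici 0)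
    · exact (continuous_id.mul Real.continuous_cosh).sub Real.continuous_sinh |>.continuousOn
    · intro y hy
      rw [interior_Ici] at hy
      have hd : HasDerivAt (fun y : ℝ => y * Real.cosh y - Real.sinh y) (y * Real.sinh y) y := by
        have := ((hasDerivAt_id y).mul (Real.hasDerivAt_cosh y)).sub (Real.hasDerivAt_sinh y)
        exact this.congr_deriv (by simp only [id, one_mul]; ring)
      rw [hd.deriv]
      exact mul_pos hy (by rwa [Real.sinh_pos_iff])
  have := hmono (Set.self_mem_Ici) (Set.mem_Ici.2 hx.le) hx
  simpa using this

lemma aux_mul_sinh_lt {s t : ℝ} (hs : 0 < s) (hst : s < t) :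
    t * Real.sinh s < s * Real.sinh t := by
  have ht : 0 < t := hs.trans hst
  have hmono : StrictMonoOn (fun y : ℝ => Real.sinh y / y) (Set.Ioi 0) := by
    apply strictMonoOn_of_deriv_pos (convex_Ioi 0)
    · exact ContinuousOn.div Real.continuous_sinh.continuousOn continuous_id.continuousOn
        (fun y hy => ne_of_gt hy)
    · intro y hy
      rw [interior_Ioi] at hy
      have hy0 : (0:ℝ) < y := hy
      have hd : HasDerivAt (fun y : ℝ => Real.sinh y / y)
          ((Real.cosh y * y - Real.sinh y * 1) / y ^ 2) y :=
        (Real.hasDerivAt_sinh y).div (hasDerivAt_id y) (ne_of_gt hy0)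
      rw [hd.deriv]
      apply div_pos _ (by positivity)
      have := aux_sinh_lt_mul_cosh hy0
      nlinarith
  have := hmono (Set.mem_Ioi.2 hs) (Set.mem_Ioi.2 ht) hst
  rw [div_lt_div_iff₀ hs ht] at this
  linarith

lemma aux_tanh_lt_tanh {u v : ℝ} (huv : u < v) : Real.tanh u < Real.tanh v := by
  rw [Real.tanh_eq_sinh_div_cosh, Real.tanh_eq_sinh_div_cosh,
    div_lt_div_iff₀ (Real.cosh_pos _) (Real.cosh_pos _)]
  have h : 0 < Real.sinh (v - u) := by rwa [Real.sinh_pos_iff, sub_pos]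
  rw [Real.sinh_sub] at h
  linarith

lemma aux_mul_tanh_lt {u v : ℝ} (hu : 0 < u) (huv : u < v) :
    u * Real.tanh v < v * Real.tanh u := by
  have hv : 0 < v := hu.trans huv
  rw [Real.tanh_eq_sinh_div_cosh, Real.tanh_eq_sinh_div_cosh]
  rw [← mul_div_assoc, ← mul_div_assoc, div_lt_div_iff₀ (Real.cosh_pos _) (Real.cosh_pos _)]
  have h1 := aux_mul_sinh_lt (s := v - u) (t := v + u) (by linarith) (by linarith)
  rw [Real.sinh_sub, Real.sinh_add] at h1
  nlinarith

/-- The positive solution of the mean-field equation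
`p = tanh(b·β·p)` is strictly increasing in the inverse temperature `β`. -/
theorem mean_field_solution_strict_mono
    (b β β' : ℝ) (hb : 0 < b) (hβ : 1 / b < β) (hββ' : β < β')
    (p p' : ℝ)
    (hp : p ∈ Set.Ioo (0 : ℝ) 1) (hpeq : p = Real.tanh (b * β * p))
    (hp' : p' ∈ Set.Ioo (0 : ℝ) 1) (hp'eq : p' = Real.tanh (b * β' * p')) :
    p < p' := by
  obtain ⟨hp0, hp1⟩ := hp
  obtain ⟨hp'0, hp'1⟩ := hp'
  have hβ0 : 0 < β := lt_trans (by positivity) hβ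
  have hβ'0 : 0 < β' := hβ0.trans hββ'
  -- p < tanh (b β' p)
  have hkey : p < Real.tanh (b * β' * p) := by
    rw [hpeq]
    nth_rewrite 2 [← hpeq]
    exact aux_tanh_lt_tanh (by nlinarith [mul_pos (mul_pos hb hp0) (sub_pos.2 hββ')])
  by_contra hcon
  push_neg at hcon  -- p' ≤ p
  rcases eq_or_lt_of_le hcon with heq | hlt
  · rw [← heq] at hkey
    rw [← hp'eq] at hkey
    exact lt_irrefl _ hkey
  · -- p' < p, apply aux_mul_tanh_lt with u = b β' p', v = b β' p
    have h2 := aux_mul_tanh_lt (u := b * β' * p') (v := b * β' * p)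
      (by positivity) (by nlinarith [mul_pos (mul_pos hb hβ'0) (sub_pos.2 hlt)])
    rw [← hp'eq] at h2
    -- b β' p' * tanh(b β' p) < b β' p * p'
    have h3 : b * β' * p' * p < b * β' * p' * Real.tanh (b * β' * p) := by
      apply mul_lt_mul_of_pos_left hkey (by positivity)
    nlinarith
end

section
/- Let M be a nonempty finite set with weight function μ : M → (0,∞), β > 0, A : M → ℝ and B : M → ℝⁿ, and set H(q,m) = A(m) + ⟨q, B(m)⟩ for q ∈ ℝⁿ. For a positive probability density ρ on (M,μ), set Ψ(q,ρ) = β⁻¹·S(ρ) − Σ_{m∈M} H(q,m)·ρ(m)·μ(m), and let ψ(q) = β⁻¹·log Σ_{m∈M} exp(−β·H(q,m))·μ(m). Suppose ρ is a positive probability density, q ∈ ℝⁿ, p := −Σ_{m∈M} B(m)·ρ(m)·μ(m) ∈ ℝⁿ, and q* ∈ ℝⁿ satisfies ∇ψ(q*) = p. Then Ψ(q,ρ) ≤ ⟨p, q⟩ − ( ⟨p, q*⟩ − ψ(q*) ); i.e., the minus free energy of any macroscopic state with generalized pressure p is bounded above by ⟨p,q⟩ minus the Legendre transform of ψ at p.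 -/
open Finset

/-- The minus free energy `Ψ(q,ρ)` of any macroscopic state `ρ`
with generalized pressure `p` is bounded above by `⟨p,q⟩` minus the Legendre
transform of the equilibrium minus free energy `ψ` at `p`, where `q*` is a
point with `∇ψ(q*) = p`. -/
theorem minus_free_energy_upper_bound
    {M : Type*} [Fintype M] [Nonempty M] {n : ℕ}
    (μ : M → ℝ) (hμ : ∀ m, 0 < μ m)
    (β : ℝ) (hβ : 0 < β)
    (A : M → ℝ) (B : M → Fin n → ℝ)
    (H : (Fin n → ℝ) → M → ℝ)
    (hH : ∀ q m, H q m = A m + ∑ i, q i * B m i)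
    (ψ : (Fin n → ℝ) → ℝ)
    (hψ : ∀ q, ψ q = β⁻¹ * Real.log (∑ m, Real.exp (-β * H q m) * μ m))
    (ρ : M → ℝ) (hρpos : ∀ m, 0 < ρ m) (hρsum : ∑ m, ρ m * μ m = 1)
    (q qstar : Fin n → ℝ) (p : Fin n → ℝ)
    (hp : ∀ i, p i = -∑ m, B m i * ρ m * μ m)
    (hgrad : ∀ v : Fin n → ℝ, fderiv ℝ ψ qstar v = ∑ i, p i * v i) :
    β⁻¹ * (-∑ m, ρ m * Real.log (ρ m) * μ m) - ∑ m, H q m * ρ m * μ m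
      ≤ (∑ i, p i * q i) - ((∑ i, p i * qstar i) - ψ qstar) := by
  set S1 : ℝ := ∑ m, ρ m * Real.log (ρ m) * μ m with hS1
  set Z : ℝ := ∑ m, Real.exp (-β * H qstar m) * μ m with hZ
  -- Jensen's inequality for log with weights w m = ρ m * μ m
  have hw : ∀ m : M, (0:ℝ) ≤ ρ m * μ m := fun m => le_of_lt (mul_pos (hρpos m) (hμ m))
  have hx : ∀ m : M, Real.exp (-β * H qstar m) / ρ m ∈ Set.Ioi (0:ℝ) :=
    fun m => div_pos (Real.exp_pos _) (hρpos m)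
  have jensen : ∑ m, (ρ m * μ m) • Real.log (Real.exp (-β * H qstar m) / ρ m)
      ≤ Real.log (∑ m, (ρ m * μ m) • (Real.exp (-β * H qstar m) / ρ m)) := by
    exact (strictConcaveOn_log_Ioi.concaveOn).le_map_sum
      (fun m _ => hw m) hρsum (fun m _ => hx m)
  have hsum_eq : ∑ m, (ρ m * μ m) • (Real.exp (-β * H qstar m) / ρ m) = Z := by
    rw [hZ]
    refine Finset.sum_congr rfl fun m _ => ?_
    have : ρ m ≠ 0 := ne_of_gt (hρpos m)
    field_simp
    rw [smul_eq_mul]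
    field_simp
  have hlog_eq : ∀ m : M, (ρ m * μ m) • Real.log (Real.exp (-β * H qstar m) / ρ m)
      = (ρ m * μ m) * (-β * H qstar m - Real.log (ρ m)) := by
    intro m
    rw [smul_eq_mul, Real.log_div (Real.exp_ne_zero _) (ne_of_gt (hρpos m)), Real.log_exp]
  have key : -β * (∑ m, H qstar m * ρ m * μ m) - S1 ≤ Real.log Z := by
    have h1 : ∑ m, (ρ m * μ m) • Real.log (Real.exp (-β * H qstar m) / ρ m)
        = -β * (∑ m, H qstar m * ρ m * μ m) - S1 := by
      simp only [hlog_eq]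
      rw [hS1, Finset.mul_sum, ← Finset.sum_sub_distrib]
      refine Finset.sum_congr rfl fun m _ => ?_
      ring
    rw [← h1]
    calc _ ≤ Real.log (∑ m, (ρ m * μ m) • (Real.exp (-β * H qstar m) / ρ m)) := jensen
      _ = Real.log Z := by rw [hsum_eq]
  -- Gibbs inequality at qstar
  have gibbs : β⁻¹ * (-S1) - ∑ m, H qstar m * ρ m * μ m ≤ ψ qstar := by
    rw [hψ, ← hZ]
    have := mul_le_mul_of_nonneg_left key (le_of_lt (inv_pos.mpr hβ))
    have hβne : β ≠ 0 := ne_of_gt hβ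
    calc β⁻¹ * (-S1) - ∑ m, H qstar m * ρ m * μ m
        = β⁻¹ * (-β * (∑ m, H qstar m * ρ m * μ m) - S1) := by field_simp; ring
      _ ≤ β⁻¹ * Real.log Z := this
  -- Linearity: E q - E qstar = -∑ i, p i * (q i - qstar i)
  have hE : ∑ m, H q m * ρ m * μ m - ∑ m, H qstar m * ρ m * μ m
      = -∑ i, p i * (q i - qstar i) := by
    rw [← Finset.sum_sub_distrib, ← Finset.sum_neg_distrib]
    calc ∑ m, (H q m * ρ m * μ m - H qstar m * ρ m * μ m)
        = ∑ m, ∑ i, (q i - qstar i) * B m i * ρ m * μ m := by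
          refine Finset.sum_congr rfl fun m _ => ?_
          rw [hH, hH,
            show (A m + ∑ i, q i * B m i) * ρ m * μ m
                - (A m + ∑ i, qstar i * B m i) * ρ m * μ m
              = ((∑ i, q i * B m i) - ∑ i, qstar i * B m i) * (ρ m * μ m) by ring,
            ← Finset.sum_sub_distrib, Finset.sum_mul]
          exact Finset.sum_congr rfl fun i _ => by ring
      _ = ∑ i, ∑ m, (q i - qstar i) * B m i * ρ m * μ m := Finset.sum_comm
      _ = ∑ i, -(p i * (q i - qstar i)) := by
          refine Finset.sum_congr rfl fun i _ => ?_
          rw [hp i, neg_mul, neg_neg, Finset.sum_mul]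
          exact Finset.sum_congr rfl fun m _ => by ring
  have hsplit : ∑ i, p i * (q i - qstar i) = ∑ i, p i * q i - ∑ i, p i * qstar i := by
    rw [← Finset.sum_sub_distrib]
    exact Finset.sum_congr rfl fun i _ => by ring
  linarith [gibbs]
end

section
/- Fix b > 0 and let β₀, β₁ satisfy 1/b < β₀ < β₁. For β ∈ {β₀, β₁} let F_β(p) = −b·p²/2 + β⁻¹·c(p) for p ∈ (−1,1), let p₊(β₀) be the unique p ∈ (0,1) with p = tanh(b·β₀·p), and let W(β₁) = convexHull ℝ { (p, F_{β₁}(p)) : p ∈ (−1,1) } ⊂ ℝ². Then for every p ∈ (−1,1) with |p| > p₊(β₀), the point (p, F_{β₀}(p)) does NOT belong to W(β₁). (Geometrically: the stable part of the Curie–Weiss equilibrium Legendrian at inverse temperature β₀ is disjoint from the limiting basin of attraction at inverse temperature β₁ whenever β₀ < β₁.) -/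
set_option maxHeartbeats 1000000

noncomputable def myAtanh (x : ℝ) : ℝ := (Real.log (1 + x) - Real.log (1 - x)) / 2


lemma myAtanh_zero : myAtanh 0 = 0 := by simp [myAtanh]

lemma myAtanh_tanh (M : ℝ) : myAtanh (Real.tanh M) = M := by
  have hc : 0 < Real.cosh M := Real.cosh_pos M
  have h1 : 1 + Real.tanh M = Real.exp M / Real.cosh M := by
    rw [Real.tanh_eq_sinh_div_cosh, ← Real.cosh_add_sinh]
    field_simp
  have h2 : 1 - Real.tanh M = Real.exp (-M) / Real.cosh M := by
    rw [Real.tanh_eq_sinh_div_cosh, ← Real.cosh_sub_sinh]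
    field_simp
  rw [myAtanh, h1, h2, Real.log_div (by positivity) (ne_of_gt hc),
    Real.log_div (by positivity) (ne_of_gt hc), Real.log_exp, Real.log_exp]
  ring

lemma tanh_mem_Ioo {M : ℝ} (hM : 0 < M) : Real.tanh M ∈ Set.Ioo (0:ℝ) 1 := by
  have hc : 0 < Real.cosh M := Real.cosh_pos M
  have hs : 0 < Real.sinh M := Real.sinh_pos_iff.2 hM
  have hlt : Real.sinh M < Real.cosh M := by
    have := Real.cosh_sub_sinh M
    have he : 0 < Real.exp (-M) := Real.exp_pos _
    linarith
  rw [Real.tanh_eq_sinh_div_cosh]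
  constructor
  · positivity
  · rw [div_lt_one hc]; exact hlt

lemma myAtanh_mono {x y : ℝ} (hx : -1 < x) (hxy : x ≤ y) (hy : y < 1) :
    myAtanh x ≤ myAtanh y := by
  have h1 : Real.log (1 + x) ≤ Real.log (1 + y) :=
    Real.log_le_log (by linarith) (by linarith)
  have h2 : Real.log (1 - y) ≤ Real.log (1 - x) :=
    Real.log_le_log (by linarith) (by linarith)
  unfold myAtanh; linarith

lemma hasDerivAt_myAtanh {x : ℝ} (hx : x ∈ Set.Ioo (-1:ℝ) 1) :
    HasDerivAt myAtanh (1/(1-x^2)) x := by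
  obtain ⟨hx1, hx2⟩ := hx
  have h1 : HasDerivAt (fun u : ℝ => Real.log (1 + u)) (1/(1+x)) x := by
    have := (Real.hasDerivAt_log (by linarith : (1:ℝ) + x ≠ 0)).comp x
      ((hasDerivAt_id x).const_add 1)
    simpa [one_div, Function.comp_def] using this
  have h2 : HasDerivAt (fun u : ℝ => Real.log (1 - u)) (-(1/(1-x))) x := by
    have := (Real.hasDerivAt_log (by linarith : (1:ℝ) - x ≠ 0)).comp x
      ((hasDerivAt_id x).const_sub 1)
    simpa [one_div, Function.comp_def] using this
  have := (h1.sub h2).div_const 2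
  refine HasDerivAt.congr_deriv this ?_
  have ha : (1:ℝ) + x ≠ 0 := by linarith
  have hb : (1:ℝ) - x ≠ 0 := by linarith
  have hc : (1:ℝ) - x^2 ≠ 0 := by nlinarith
  field_simp
  ring



lemma cEnt_even (x : ℝ) : cEnt (-x) = cEnt x := by
  unfold cEnt
  rw [show (1:ℝ) + -x = 1 - x by ring, show (1:ℝ) - -x = 1 + x by ring, add_comm]

lemma cEnt_neg {x : ℝ} (hx : x ∈ Set.Ioo (-1:ℝ) 1) : cEnt x < 0 := by
  obtain ⟨h1, h2⟩ := hx
  have a1 : (0:ℝ) < (1 + x)/2 := by linarith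
  have a2 : (1 + x)/2 < 1 := by linarith
  have b1 : (0:ℝ) < (1 - x)/2 := by linarith
  have b2 : (1 - x)/2 < 1 := by linarith
  have l1 : Real.log ((1 + x)/2) < 0 := Real.log_neg a1 a2
  have l2 : Real.log ((1 - x)/2) < 0 := Real.log_neg b1 b2
  unfold cEnt
  nlinarith

lemma hasDerivAt_cEnt {x : ℝ} (hx : x ∈ Set.Ioo (-1:ℝ) 1) :
    HasDerivAt cEnt (myAtanh x) x := by
  obtain ⟨hx1, hx2⟩ := hx
  have ha : (0:ℝ) < (1 + x)/2 := by linarith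
  have hb : (0:ℝ) < (1 - x)/2 := by linarith
  have h1 : HasDerivAt (fun u : ℝ => (1 + u)/2) (1/2) x := by
    simpa using (((hasDerivAt_id x).const_add 1).div_const 2)
  have h2 : HasDerivAt (fun u : ℝ => (1 - u)/2) (-(1/2)) x := by
    simpa [neg_div] using (((hasDerivAt_id x).const_sub 1).div_const 2)
  have l1 : HasDerivAt (fun u : ℝ => Real.log ((1 + u)/2)) (((1+x)/2)⁻¹ * (1/2)) x :=
    by have := (Real.hasDerivAt_log (ne_of_gt ha)).comp x h1; exact this
  have l2 : HasDerivAt (fun u : ℝ => Real.log ((1 - u)/2)) (((1-x)/2)⁻¹ * (-(1/2))) x :=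
    by have := (Real.hasDerivAt_log (ne_of_gt hb)).comp x h2; exact this
  have m1 := h1.mul l1
  have m2 := h2.mul l2
  have := m1.add m2
  have heq : cEnt = fun u : ℝ =>
      ((1 + u)/2) * Real.log ((1 + u)/2) + ((1 - u)/2) * Real.log ((1 - u)/2) := rfl
  rw [heq]
  refine HasDerivAt.congr_deriv this ?_
  have e1 : Real.log ((1 + x)/2) = Real.log (1 + x) - Real.log 2 :=
    Real.log_div (by linarith) two_ne_zero
  have e2 : Real.log ((1 - x)/2) = Real.log (1 - x) - Real.log 2 :=
    Real.log_div (by linarith) two_ne_zero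
  rw [myAtanh, e1, e2]
  have ha' : (1:ℝ) + x ≠ 0 := by linarith
  have hb' : (1:ℝ) - x ≠ 0 := by linarith
  field_simp
  ring

lemma deriv_myAtanh {x : ℝ} (hx : x ∈ Set.Ioo (-1:ℝ) 1) :
    deriv myAtanh x = 1/(1-x^2) := (hasDerivAt_myAtanh hx).deriv

lemma convexOn_myAtanh {y : ℝ} (hy0 : 0 ≤ y) (hy : y < 1) :
    ConvexOn ℝ (Set.Icc (0:ℝ) y) myAtanh := by
  have hsub : Set.Icc (0:ℝ) y ⊆ Set.Ioo (-1:ℝ) 1 := fun x hx =>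
    ⟨by linarith [hx.1], by linarith [hx.2]⟩
  have hsub' : Set.Ioo (0:ℝ) y ⊆ Set.Ioo (-1:ℝ) 1 := fun x hx =>
    ⟨by linarith [hx.1], by linarith [hx.2]⟩
  have hne : ∀ x ∈ Set.Ioo (-1:ℝ) 1, (1:ℝ) - x^2 ≠ 0 := by
    intro x hx
    nlinarith [hx.1, hx.2]
  apply convexOn_of_deriv2_nonneg (convex_Icc 0 y)
  · exact fun x hx => ((hasDerivAt_myAtanh (hsub hx)).continuousAt).continuousWithinAt
  · rw [interior_Icc]
    exact fun x hx => ((hasDerivAt_myAtanh (hsub' hx)).differentiableAt).differentiableWithinAt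
  · rw [interior_Icc]
    apply DifferentiableOn.congr (f := fun x : ℝ => 1/(1-x^2))
    · intro x hx
      have := hne x (hsub' hx)
      apply DifferentiableAt.differentiableWithinAt
      exact (differentiable_const (1:ℝ) |>.differentiableAt).div
        (by fun_prop) this
    · exact fun x hx => deriv_myAtanh (hsub' hx)
  · rw [interior_Icc]
    intro x hx
    have hx' := hsub' hx
    have hden := hne x hx'
    have hw : HasDerivAt (fun u : ℝ => 1/(1-u^2)) (2*x/(1-x^2)^2) x := by
      have hb : HasDerivAt (fun u : ℝ => 1 - u^2) (-(2*x)) x := by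
        simpa using ((hasDerivAt_pow 2 x).const_sub 1)
      have := hb.inv hden
      simp only [one_div]
      refine HasDerivAt.congr_deriv this ?_
      field_simp
    have hev : deriv myAtanh =ᶠ[nhds x] (fun u : ℝ => 1/(1-u^2)) := by
      filter_upwards [isOpen_Ioo.mem_nhds hx'] with u hu
      exact deriv_myAtanh hu
    have : deriv (deriv myAtanh) x = 2*x/(1-x^2)^2 := by
      rw [Filter.EventuallyEq.deriv_eq hev]
      exact hw.deriv
    show 0 ≤ deriv^[2] myAtanh x
    have h2 : deriv^[2] myAtanh x = deriv (deriv myAtanh) x := by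
      simp [Function.iterate_succ, Function.comp]
    rw [h2, this]
    exact div_nonneg (by linarith [hx.1]) (sq_nonneg _)

lemma myAtanh_slope {x y : ℝ} (hx : 0 ≤ x) (hxy : x ≤ y) (hy : y < 1) :
    y * myAtanh x ≤ x * myAtanh y := by
  rcases eq_or_lt_of_le (le_trans hx hxy) with h0 | hy0
  · have hx0 : x = 0 := le_antisymm (h0 ▸ hxy) hx
    rw [hx0, ← h0]
  · have hcvx := convexOn_myAtanh (le_of_lt hy0) hy
    have h1 : myAtanh x ≤ (1 - x/y) * myAtanh 0 + (x/y) * myAtanh y := by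
      have := hcvx.2 (Set.mem_Icc.2 ⟨le_refl 0, le_of_lt hy0⟩)
        (Set.mem_Icc.2 ⟨le_of_lt hy0, le_refl y⟩)
        (by rw [sub_nonneg]; exact (div_le_one hy0).2 hxy : (0:ℝ) ≤ 1 - x/y)
        (by positivity : (0:ℝ) ≤ x/y) (by ring)
      have harg : (1 - x/y) • (0:ℝ) + (x/y) • y = x := by
        simp [smul_eq_mul]
        field_simp
      rw [harg] at this
      simpa [smul_eq_mul] using this
    have h0 : myAtanh 0 = 0 := by simp [myAtanh]
    rw [h0] at h1
    have := mul_le_mul_of_nonneg_left h1 (le_of_lt hy0)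
    calc y * myAtanh x ≤ y * ((1 - x/y)*0 + x/y * myAtanh y) := by
          simpa using this
      _ = x * myAtanh y := by field_simp; ring





lemma hasDerivAt_G (a c : ℝ) {x : ℝ} (hx : x ∈ Set.Ioo (-1:ℝ) 1) :
    HasDerivAt (fun u => cEnt u - a*u^2/2 - c*u) (myAtanh x - a*x - c) x := by
  have h1 := hasDerivAt_cEnt hx
  have h2 : HasDerivAt (fun u : ℝ => a*u^2/2) (a*x) x := by
    have := ((hasDerivAt_pow 2 x).const_mul a).div_const 2
    refine HasDerivAt.congr_deriv this ?_
    push_cast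
    ring
  have h3 : HasDerivAt (fun u : ℝ => c*u) c x := by
    simpa using (hasDerivAt_id x).const_mul c
  exact (h1.sub h2).sub h3

lemma my_mono (a c lo : ℝ) (h0 : 0 ≤ lo)
    (h : ∀ x ∈ Set.Ioo lo (1:ℝ), a*x + c ≤ myAtanh x) :
    MonotoneOn (fun u => cEnt u - a*u^2/2 - c*u) (Set.Ico lo 1) := by
  have hsub : Set.Ico lo (1:ℝ) ⊆ Set.Ioo (-1:ℝ) 1 := fun x hx =>
    ⟨by linarith [hx.1], hx.2⟩
  apply monotoneOn_of_deriv_nonneg (convex_Ico lo 1)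
  · exact fun x hx => (hasDerivAt_G a c (hsub hx)).continuousAt.continuousWithinAt
  · rw [interior_Ico]
    exact fun x hx =>
      (hasDerivAt_G a c (hsub (Set.Ioo_subset_Ico_self hx))).differentiableAt.differentiableWithinAt
  · rw [interior_Ico]
    intro x hx
    rw [(hasDerivAt_G a c (hsub (Set.Ioo_subset_Ico_self hx))).deriv]
    have := h x hx
    linarith

lemma my_anti (a c lo hi : ℝ) (h0 : 0 ≤ lo) (h1 : hi < 1)
    (h : ∀ x ∈ Set.Ioo lo hi, myAtanh x ≤ a*x + c) :
    AntitoneOn (fun u => cEnt u - a*u^2/2 - c*u) (Set.Icc lo hi) := by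
  have hsub : Set.Icc lo hi ⊆ Set.Ioo (-1:ℝ) 1 := fun x hx =>
    ⟨by linarith [hx.1], by linarith [hx.2]⟩
  apply antitoneOn_of_deriv_nonpos (convex_Icc lo hi)
  · exact fun x hx => (hasDerivAt_G a c (hsub hx)).continuousAt.continuousWithinAt
  · rw [interior_Icc]
    exact fun x hx =>
      (hasDerivAt_G a c (hsub (Set.Ioo_subset_Icc_self hx))).differentiableAt.differentiableWithinAt
  · rw [interior_Icc]
    intro x hx
    rw [(hasDerivAt_G a c (hsub (Set.Ioo_subset_Icc_self hx))).deriv]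
    have := h x hx
    linarith




/-- For `1/b < β₀ < β₁`, no point `(p, F_{β₀}(p))` of the stable
part (`|p| > p₊(β₀)`) of the Curie–Weiss equilibrium Legendrian at inverse
temperature `β₀` lies in the convex hull `W(β₁)` of the graph of `F_{β₁}` over
`(−1,1)`. -/
theorem stable_branch_disjoint_from_basin
    (b β₀ β₁ : ℝ) (hb : 0 < b) (hβ₀ : 1 / b < β₀) (hββ : β₀ < β₁)
    (pPlus : ℝ) (hpPlus : pPlus ∈ Set.Ioo (0 : ℝ) 1)
    (hpPluseq : pPlus = Real.tanh (b * β₀ * pPlus))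
    (p : ℝ) (hp : p ∈ Set.Ioo (-1 : ℝ) 1) (hpstable : pPlus < |p|) :
    (p, -b * p ^ 2 / 2 + β₀⁻¹ * cEnt p) ∉
      convexHull ℝ {pz : ℝ × ℝ | ∃ x ∈ Set.Ioo (-1 : ℝ) 1,
        pz = (x, -b * x ^ 2 / 2 + β₁⁻¹ * cEnt x)} := by
  intro hmem
  obtain ⟨hp1, hp2⟩ := hp
  obtain ⟨hpP0, hpP1⟩ := hpPlus
  have hβ₀pos : 0 < β₀ := lt_trans (by positivity) hβ₀
  have hβ₁pos : 0 < β₁ := lt_trans hβ₀pos hββ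
  have hinv : β₁⁻¹ < β₀⁻¹ := by
    rw [inv_lt_inv₀ hβ₁pos hβ₀pos]
    exact hββ
  obtain ⟨q, hqdef⟩ : ∃ q : ℝ, q = |p| := ⟨_, rfl⟩
  rw [← hqdef] at hpstable
  have hq0 : 0 < q := lt_trans hpP0 hpstable
  have hq1 : q < 1 := hqdef ▸ abs_lt.2 ⟨hp1, hp2⟩
  have hceq : cEnt p = cEnt q := by
    rw [hqdef]
    rcases abs_choice p with h | h
    · rw [h]
    · rw [h, cEnt_even]
  have hsqeq : p ^ 2 = q ^ 2 := by rw [hqdef, sq_abs]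
  have hatanhP : myAtanh pPlus = b * β₀ * pPlus := by
    have := myAtanh_tanh (b * β₀ * pPlus)
    rw [← hpPluseq] at this
    exact this
  -- the scaling identity
  have hform : ∀ β : ℝ, 0 < β → ∀ c v : ℝ,
      β⁻¹ * (cEnt v - (b*β)*v^2/2 - c*v) = -b*v^2/2 + β⁻¹ * cEnt v - β⁻¹*c*v := by
    intro β hβ c v
    field_simp
    ring
  rcases lt_or_ge (myAtanh q) (b*β₁*q) with hcase | hcase
  -- CASE B : myAtanh q < b β₁ q
  · have hbβ₁pos : 0 < b*β₁ := by positivity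
    obtain ⟨t, htdef⟩ : ∃ t : ℝ, t = Real.tanh (b*β₁+1) := ⟨_, rfl⟩
    have ht : t ∈ Set.Ioo (0:ℝ) 1 := htdef ▸ tanh_mem_Ioo (by linarith)
    have hatanht : myAtanh t = b*β₁+1 := by rw [htdef, myAtanh_tanh]
    have hqt : q < t := by
      by_contra hqt
      push_neg at hqt
      have hmono := myAtanh_mono (by linarith [ht.1]) hqt hq1
      rw [hatanht] at hmono
      nlinarith
    have hk : ContinuousOn (fun x => myAtanh x - b*β₁*x) (Set.Icc q t) := by
      intro x hx
      have hx' : x ∈ Set.Ioo (-1:ℝ) 1 := ⟨by linarith [hx.1], by linarith [hx.2, ht.2]⟩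
      exact ((hasDerivAt_myAtanh hx').continuousAt.sub
        ((continuous_const.mul continuous_id).continuousAt)).continuousWithinAt
    have h0mem : (0:ℝ) ∈ Set.Ioo (myAtanh q - b*β₁*q) (myAtanh t - b*β₁*t) := by
      constructor
      · linarith
      · rw [hatanht]
        nlinarith [ht.2]
    obtain ⟨r, hr, hkr⟩ := intermediate_value_Ioo (le_of_lt hqt) hk h0mem
    have hr0 : 0 < r := lt_trans hq0 hr.1
    have hr1 : r < 1 := lt_trans hr.2 ht.2
    have hatanhr : myAtanh r = b*β₁*r := by
      have : myAtanh r - b*β₁*r = 0 := hkr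
      linarith
    obtain ⟨m, hmdef⟩ : ∃ m : ℝ, m = -b*r^2/2 + β₁⁻¹ * cEnt r := ⟨_, rfl⟩
    have hTconv : Convex ℝ {z : ℝ × ℝ | m ≤ z.2} := by
      intro z hz w hw α γ hα hγ hαγ
      simp only [Set.mem_setOf_eq] at hz hw ⊢
      have h2 : (α • z + γ • w).2 = α * z.2 + γ * w.2 := rfl
      rw [h2]
      have hm : α * m + γ * m = m := by rw [← add_mul, hαγ, one_mul]
      have e1 := mul_le_mul_of_nonneg_left hz hα
      have e2 := mul_le_mul_of_nonneg_left hw hγ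
      linarith
    -- the graph is contained in the halfplane
    have hST : {pz : ℝ × ℝ | ∃ x ∈ Set.Ioo (-1 : ℝ) 1,
        pz = (x, -b * x ^ 2 / 2 + β₁⁻¹ * cEnt x)} ⊆ {z : ℝ × ℝ | m ≤ z.2} := by
      rintro z ⟨x, hx, rfl⟩
      simp only [Set.mem_setOf_eq]
      obtain ⟨u, hudef⟩ : ∃ u : ℝ, u = |x| := ⟨_, rfl⟩
      have hu0 : 0 ≤ u := hudef ▸ abs_nonneg x
      have hu1 : u < 1 := hudef ▸ abs_lt.2 ⟨hx.1, hx.2⟩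
      have hcxu : cEnt x = cEnt u := by
        rw [hudef]
        rcases abs_choice x with h | h
        · rw [h]
        · rw [h, cEnt_even]
      have hsqxu : x ^ 2 = u ^ 2 := by rw [hudef, sq_abs]
      have key : cEnt r - (b*β₁)*r^2/2 - 0*r ≤ cEnt u - (b*β₁)*u^2/2 - 0*u := by
        rcases le_or_gt u r with hur | hru
        · have hanti := my_anti (b*β₁) 0 0 r (le_refl 0) hr1 (by
            intro y hy
            have hs := myAtanh_slope (le_of_lt hy.1) (le_of_lt hy.2) hr1
            rw [hatanhr] at hs
            nlinarith [hy.1, hy.2])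
          exact hanti (Set.mem_Icc.2 ⟨hu0, hur⟩)
            (Set.mem_Icc.2 ⟨le_of_lt hr0, le_refl r⟩) hur
        · have hmono := my_mono (b*β₁) 0 r (le_of_lt hr0) (by
            intro y hy
            have hs := myAtanh_slope (le_of_lt hr0) (le_of_lt hy.1) hy.2
            rw [hatanhr] at hs
            nlinarith [hy.1, hy.2])
          exact hmono (Set.mem_Ico.2 ⟨le_refl r, hr1⟩)
            (Set.mem_Ico.2 ⟨le_of_lt hru, hu1⟩) (le_of_lt hru)
      have hmul := mul_le_mul_of_nonneg_left key (inv_nonneg.2 (le_of_lt hβ₁pos))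
      rw [hform β₁ hβ₁pos 0 r, hform β₁ hβ₁pos 0 u] at hmul
      calc m ≤ -b*u^2/2 + β₁⁻¹ * cEnt u := by rw [hmdef]; linarith
        _ = -b * x ^ 2 / 2 + β₁⁻¹ * cEnt x := by rw [hsqxu, hcxu]
    have hle := convexHull_min hST hTconv hmem
    simp only [Set.mem_setOf_eq] at hle
    -- now contradiction: F₀(p) < m
    have hqr : q ≤ r := le_of_lt hr.1
    have key0 : cEnt q - (b*β₀)*q^2/2 - 0*q ≤ cEnt r - (b*β₀)*r^2/2 - 0*r := by
      have hmono := my_mono (b*β₀) 0 pPlus (le_of_lt hpP0) (by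
        intro y hy
        have hs := myAtanh_slope (le_of_lt hpP0) (le_of_lt hy.1) hy.2
        rw [hatanhP] at hs
        nlinarith [hy.1, hy.2])
      exact hmono (Set.mem_Ico.2 ⟨le_of_lt hpstable, hq1⟩)
        (Set.mem_Ico.2 ⟨le_of_lt (lt_trans hpstable hr.1), hr1⟩) hqr
    have hmul0 := mul_le_mul_of_nonneg_left key0 (inv_nonneg.2 (le_of_lt hβ₀pos))
    rw [hform β₀ hβ₀pos 0 q, hform β₀ hβ₀pos 0 r] at hmul0
    have hcr : cEnt r < 0 := cEnt_neg ⟨by linarith, hr1⟩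
    have hflip : β₀⁻¹ * cEnt r < β₁⁻¹ * cEnt r := by
      nlinarith
    have hF0 : -b * p ^ 2 / 2 + β₀⁻¹ * cEnt p < m := by
      rw [hsqeq, hceq, hmdef]
      linarith
    linarith
  -- CASE A : b β₁ q ≤ myAtanh q
  · set σ : ℝ := if 0 ≤ p then 1 else -1 with hσdef
    have hσp : σ * p = q := by
      rw [hσdef, hqdef]
      rcases le_or_gt 0 p with h | h
      · rw [if_pos h, one_mul, abs_of_nonneg h]
      · rw [if_neg (not_le.2 h), abs_of_neg h]
        ring
    have hσx : ∀ x : ℝ, σ * x ≤ |x| := by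
      intro x
      rw [hσdef]
      rcases le_or_gt 0 p with h | h
      · rw [if_pos h, one_mul]
        exact le_abs_self x
      · rw [if_neg (not_le.2 h)]
        have := neg_le_abs x
        linarith
    obtain ⟨A, hAdef⟩ : ∃ A : ℝ, A = myAtanh q - b*β₁*q := ⟨_, rfl⟩
    have hA0 : 0 ≤ A := by rw [hAdef]; linarith
    obtain ⟨K, hKdef⟩ : ∃ K : ℝ, K = β₁⁻¹ * A := ⟨_, rfl⟩
    have hK0 : 0 ≤ K := by rw [hKdef]; positivity
    obtain ⟨C, hCdef⟩ : ∃ C : ℝ, C = (-b*q^2/2 + β₁⁻¹ * cEnt q) - K * q := ⟨_, rfl⟩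
    have hTconv : Convex ℝ {z : ℝ × ℝ | C + K * (σ * z.1) ≤ z.2} := by
      intro z hz w hw α γ hα hγ hαγ
      simp only [Set.mem_setOf_eq] at hz hw ⊢
      have h1 : (α • z + γ • w).1 = α * z.1 + γ * w.1 := rfl
      have h2 : (α • z + γ • w).2 = α * z.2 + γ * w.2 := rfl
      rw [h1, h2]
      have e1 := mul_le_mul_of_nonneg_left hz hα
      have e2 := mul_le_mul_of_nonneg_left hw hγ
      have hC : α * C + γ * C = C := by rw [← add_mul, hαγ, one_mul]
      nlinarith [e1, e2, hC]
    have hST : {pz : ℝ × ℝ | ∃ x ∈ Set.Ioo (-1 : ℝ) 1,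
        pz = (x, -b * x ^ 2 / 2 + β₁⁻¹ * cEnt x)} ⊆
        {z : ℝ × ℝ | C + K * (σ * z.1) ≤ z.2} := by
      rintro z ⟨x, hx, rfl⟩
      simp only [Set.mem_setOf_eq]
      obtain ⟨u, hudef⟩ : ∃ u : ℝ, u = |x| := ⟨_, rfl⟩
      have hu0 : 0 ≤ u := hudef ▸ abs_nonneg x
      have hu1 : u < 1 := hudef ▸ abs_lt.2 ⟨hx.1, hx.2⟩
      have hcxu : cEnt x = cEnt u := by
        rw [hudef]
        rcases abs_choice x with h | h
        · rw [h]
        · rw [h, cEnt_even]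
      have hsqxu : x ^ 2 = u ^ 2 := by rw [hudef, sq_abs]
      have key : cEnt q - (b*β₁)*q^2/2 - A*q ≤ cEnt u - (b*β₁)*u^2/2 - A*u := by
        rcases le_or_gt u q with huq | hqu
        · have hanti := my_anti (b*β₁) A 0 q (le_refl 0) hq1 (by
            intro y hy
            have hs := myAtanh_slope (le_of_lt hy.1) (le_of_lt hy.2) hq1
            rw [hAdef]
            nlinarith [hy.1, hy.2])
          exact hanti (Set.mem_Icc.2 ⟨hu0, huq⟩)
            (Set.mem_Icc.2 ⟨le_of_lt hq0, le_refl q⟩) huq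
        · have hmono := my_mono (b*β₁) A q (le_of_lt hq0) (by
            intro y hy
            have hs := myAtanh_slope (le_of_lt hq0) (le_of_lt hy.1) hy.2
            rw [hAdef]
            nlinarith [hy.1, hy.2])
          exact hmono (Set.mem_Ico.2 ⟨le_refl q, hq1⟩)
            (Set.mem_Ico.2 ⟨le_of_lt hqu, hu1⟩) (le_of_lt hqu)
      have hmul := mul_le_mul_of_nonneg_left key (inv_nonneg.2 (le_of_lt hβ₁pos))
      rw [hform β₁ hβ₁pos A q, hform β₁ hβ₁pos A u] at hmul
      have hσxu : K * (σ * x) ≤ K * u := by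
        apply mul_le_mul_of_nonneg_left _ hK0
        rw [hudef]
        exact hσx x
      calc C + K * (σ * x) ≤ C + K * u := by linarith
        _ ≤ -b*u^2/2 + β₁⁻¹ * cEnt u := by
            rw [hCdef, hKdef]
            linarith
        _ = -b * x ^ 2 / 2 + β₁⁻¹ * cEnt x := by rw [hsqxu, hcxu]
    have hle := convexHull_min hST hTconv hmem
    simp only [Set.mem_setOf_eq] at hle
    rw [hσp] at hle
    -- hle : C + K * q ≤ -b p²/2 + β₀⁻¹ cEnt p = -b q²/2 + β₀⁻¹ cEnt q
    have hcq : cEnt q < 0 := cEnt_neg ⟨by linarith, hq1⟩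
    have hflip : β₀⁻¹ * cEnt q < β₁⁻¹ * cEnt q := by
      nlinarith
    rw [hsqeq, hceq] at hle
    rw [hCdef] at hle
    linarith
end
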